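/- arXiv:1402.1905 — 2 statements merged into one kernel-verified Lean document; each statement's English description precedes it below -/
import Mathlib

section
/- For p = 1: the pushforward of the measure γ(dz) = π^{-1}(1+|z|²)^{-2} dz on ℂ under any Möbius transformation z ↦ (az+b)/(cz+d) with ad − bc ≠ 0 equals the pushforward of γ under some invertible affine map z ↦ αz + β (α ≠ 0). -/
/-!
`γ` is the pull-back of the normalised area measure of the Riemann sphere under stereographic
projection, so it is invariant under the Möbius maps that rotate the sphere. For `(c, d) ≠ 0` the
map `z ↦ (d̄ z - c̄) / (c z + d)` is such a rotation, and any Möbius map with bottom row `(c, d)`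
is an affine map composed with it. Invariance itself is
the change-of-variables formula: the Jacobian `N² / |cz + d|⁴`, with `N = |c|² + |d|²`, exactly
compensates the change of the density, since `1 + |w|² = N (1 + |z|²) / |cz + d|²`.
-/

open MeasureTheory Real

/-- The standard complex Cauchy measure `γ(dz) = π⁻¹ (1+|z|²)⁻² dz` on ℂ. -/
noncomputable def gammaC1 : Measure ℂ :=
  (volume : Measure ℂ).withDensity fun z =>
    ENNReal.ofReal (π⁻¹ * ((1 + ‖z‖ ^ 2) ^ 2)⁻¹)

open Set ComplexConjugate Complex

theorem Set.subsingleton_setOf_mul_add_eq_zero {K : Type*} [Field K] {a b : K}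
    (h : a ≠ 0 ∨ b ≠ 0) : {x : K | a * x + b = 0}.Subsingleton := by
  intro x hx y hy
  rcases eq_or_ne a 0 with rfl | ha
  · simp_all
  · exact mul_left_cancel₀ ha (add_right_cancel (hx.trans hy.symm))

theorem Complex.volume_setOf_mul_add_eq_zero {a b : ℂ} (h : a ≠ 0 ∨ b ≠ 0) :
    volume {z : ℂ | a * z + b = 0} = 0 :=
  (subsingleton_setOf_mul_add_eq_zero h).measure_zero volume

theorem ContinuousLinearMap.det_restrictScalars_toSpanSingleton (w : ℂ) :
    ((ContinuousLinearMap.toSpanSingleton ℂ w).restrictScalars ℝ).det = normSq w := by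
  simp [ContinuousLinearMap.det, LinearMap.det_restrictScalars, Algebra.norm_complex_eq]

section ChangeOfVariables

variable {E : Type*} [NormedAddCommGroup E] [NormedSpace ℝ E] [FiniteDimensional ℝ E]
  [MeasurableSpace E] [BorelSpace E] (μ : Measure E) [μ.IsAddHaarMeasure]

theorem MeasureTheory.map_withDensity_eq_self_of_abs_det_fderiv_mul {f : E → E}
    {f' : E → E →L[ℝ] E} {s : Set E} {g : E → ENNReal} (hf : Measurable f)
    (hs : MeasurableSet s) (hs_ae : μ sᶜ = 0) (himage_ae : μ (f '' s)ᶜ = 0)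
    (hf' : ∀ x ∈ s, HasFDerivWithinAt f (f' x) s x) (hinj : InjOn f s)
    (hg : ∀ x ∈ s, ENNReal.ofReal |(f' x).det| * g (f x) = g x) :
    (μ.withDensity g).map f = μ.withDensity g := by
  ext S hS
  have hsS : MeasurableSet (s ∩ f ⁻¹' S) := hs.inter (hf hS)
  rw [Measure.map_apply hf hS, withDensity_apply _ (hf hS), withDensity_apply _ hS]
  calc ∫⁻ x in f ⁻¹' S, g x ∂μ
      = ∫⁻ x in s ∩ f ⁻¹' S, g x ∂μ :=
        setLIntegral_congr (inter_ae_eq_right_of_ae_eq_univ (ae_eq_univ.2 hs_ae)).symm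
    _ = ∫⁻ x in s ∩ f ⁻¹' S, ENNReal.ofReal |(f' x).det| * g (f x) ∂μ :=
        setLIntegral_congr_fun hsS fun x hx => (hg x hx.1).symm
    _ = ∫⁻ x in f '' s ∩ S, g x ∂μ := by
        rw [← image_inter_preimage, lintegral_image_eq_lintegral_abs_det_fderiv_mul μ hsS
          (fun x hx => (hf' x hx.1).mono inter_subset_left) (hinj.mono inter_subset_left)]
    _ = ∫⁻ x in S, g x ∂μ :=
        setLIntegral_congr (inter_ae_eq_right_of_ae_eq_univ (ae_eq_univ.2 himage_ae))

end ChangeOfVariables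

-- `[[d̄, -c̄], [c, d]]` is `√(|c|² + |d|²)` times a matrix in `SU(2)`.
noncomputable def sphereRotation (c d z : ℂ) : ℂ := (conj d * z - conj c) / (c * z + d)

section SphereRotation

variable {c d : ℂ}

theorem measurable_sphereRotation (c d : ℂ) : Measurable (sphereRotation c d) := by
  unfold sphereRotation; fun_prop

theorem normSq_add_normSq_pos (hcd : c ≠ 0 ∨ d ≠ 0) : 0 < normSq c + normSq d := by
  rcases hcd with h | h
  · exact add_pos_of_pos_of_nonneg (normSq_pos.2 h) (normSq_nonneg d)
  · exact add_pos_of_nonneg_of_pos (normSq_nonneg c) (normSq_pos.2 h)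

theorem normSq_add_normSq_ne_zero (hcd : c ≠ 0 ∨ d ≠ 0) : (normSq c + normSq d : ℂ) ≠ 0 :=
  mod_cast (normSq_add_normSq_pos hcd).ne'

theorem normSq_add_normSq_sphereRotation_num (c d z : ℂ) :
    normSq (c * z + d) + normSq (conj d * z - conj c) =
      (normSq c + normSq d) * (1 + normSq z) := by
  simp only [normSq_apply, add_re, add_im, mul_re, mul_im, sub_re, sub_im, conj_re, conj_im]
  ring

theorem one_add_normSq_sphereRotation {z : ℂ} (hz : c * z + d ≠ 0) :
    1 + normSq (sphereRotation c d z) =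
      (normSq c + normSq d) * (1 + normSq z) / normSq (c * z + d) := by
  have hD : normSq (c * z + d) ≠ 0 := (normSq_pos.2 hz).ne'
  rw [sphereRotation, normSq_div, ← normSq_add_normSq_sphereRotation_num, eq_div_iff hD,
    add_mul, div_mul_cancel₀ _ hD, one_mul]

theorem hasDerivAt_sphereRotation {z : ℂ} (hz : c * z + d ≠ 0) :
    HasDerivAt (sphereRotation c d) ((normSq c + normSq d : ℂ) / (c * z + d) ^ 2) z := by
  have hnum : HasDerivAt (fun z => conj d * z - conj c) (conj d) z := by
    simpa using ((hasDerivAt_id z).const_mul (conj d)).sub_const (conj c)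
  have hden : HasDerivAt (fun z => c * z + d) c z := by
    simpa using ((hasDerivAt_id z).const_mul c).add_const d
  refine (hnum.div hden hz).congr_deriv ?_
  rw [normSq_eq_conj_mul_self, normSq_eq_conj_mul_self]
  ring

theorem sphereRotation_injOn (hcd : c ≠ 0 ∨ d ≠ 0) :
    InjOn (sphereRotation c d) {z | c * z + d ≠ 0} := by
  intro z₁ h₁ z₂ h₂ heq
  have hN := normSq_add_normSq_ne_zero hcd
  rw [sphereRotation, sphereRotation, div_eq_div_iff h₁ h₂] at heq
  refine mul_left_cancel₀ hN (sub_eq_zero.1 ?_)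
  rw [normSq_eq_conj_mul_self, normSq_eq_conj_mul_self]
  linear_combination heq

theorem sphereRotation_surjOn (hcd : c ≠ 0 ∨ d ≠ 0) :
    SurjOn (sphereRotation c d) {z | c * z + d ≠ 0} {w | -c * w + conj d ≠ 0} := by
  intro w (hw : -c * w + conj d ≠ 0)
  have hN := normSq_add_normSq_ne_zero hcd
  have hden : c * ((d * w + conj c) / (-c * w + conj d)) + d =
      (normSq c + normSq d) / (-c * w + conj d) := by
    rw [eq_div_iff hw, add_mul, mul_assoc, div_mul_cancel₀ _ hw, normSq_eq_conj_mul_self,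
      normSq_eq_conj_mul_self]
    ring
  have hnum : conj d * ((d * w + conj c) / (-c * w + conj d)) - conj c =
      (normSq c + normSq d) * w / (-c * w + conj d) := by
    rw [eq_div_iff hw, sub_mul, mul_assoc, div_mul_cancel₀ _ hw, normSq_eq_conj_mul_self,
      normSq_eq_conj_mul_self]
    ring
  refine ⟨(d * w + conj c) / (-c * w + conj d), ?_, ?_⟩
  · change c * _ + d ≠ 0
    rw [hden]
    exact div_ne_zero hN hw
  · rw [sphereRotation, hden, hnum, div_div_div_cancel_right₀ hw, mul_div_cancel_left₀ _ hN]

theorem normSq_deriv_sphereRotation_mul_inv_one_add_normSq_sq (hcd : c ≠ 0 ∨ d ≠ 0) {z : ℂ}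
    (hz : c * z + d ≠ 0) :
    normSq ((normSq c + normSq d : ℂ) / (c * z + d) ^ 2) *
        ((1 + normSq (sphereRotation c d z)) ^ 2)⁻¹ = ((1 + normSq z) ^ 2)⁻¹ := by
  have hN := (normSq_add_normSq_pos hcd).ne'
  have hD := (normSq_pos.2 hz).ne'
  have hz1 := (add_pos_of_pos_of_nonneg one_pos (normSq_nonneg z)).ne'
  rw [one_add_normSq_sphereRotation hz, normSq_div, map_pow, ← ofReal_add, normSq_ofReal]
  field_simp

end SphereRotation

theorem gammaC1_map_sphereRotation {c d : ℂ} (hcd : c ≠ 0 ∨ d ≠ 0) :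
    gammaC1.map (sphereRotation c d) = gammaC1 := by
  refine map_withDensity_eq_self_of_abs_det_fderiv_mul volume
    (f' := fun z => (ContinuousLinearMap.toSpanSingleton ℂ
      ((normSq c + normSq d : ℂ) / (c * z + d) ^ 2)).restrictScalars ℝ)
    (measurable_sphereRotation c d) (isOpen_ne_fun (by fun_prop) continuous_const).measurableSet
    (measure_mono_null (fun z hz => not_not.1 hz) (volume_setOf_mul_add_eq_zero hcd)) ?_
    (fun z hz => ((hasDerivAt_sphereRotation hz).hasFDerivAt.restrictScalars ℝ).hasFDerivWithinAt)
    (sphereRotation_injOn hcd) fun z hz => ?_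
  · refine measure_mono_null
      ((compl_subset_compl.2 (sphereRotation_surjOn hcd)).trans fun w hw => not_not.1 hw)
      (volume_setOf_mul_add_eq_zero ?_)
    simpa [neg_ne_zero] using hcd
  · rw [ContinuousLinearMap.det_restrictScalars_toSpanSingleton, abs_of_nonneg (normSq_nonneg _),
      ← ENNReal.ofReal_mul (normSq_nonneg _), Complex.sq_norm, Complex.sq_norm, mul_left_comm,
      normSq_deriv_sphereRotation_mul_inv_one_add_normSq_sq hcd hz]

theorem div_eq_mul_sphereRotation_add {a b c d z : ℂ} (hz : c * z + d ≠ 0) :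
    (a * z + b) / (c * z + d) =
      (a * d - b * c) / (normSq c + normSq d) * sphereRotation c d z +
        (a * conj c + b * conj d) / (normSq c + normSq d) := by
  have hcd : c ≠ 0 ∨ d ≠ 0 := by
    by_contra! h
    simp [h] at hz
  have hN := normSq_add_normSq_ne_zero hcd
  have hNdef : (normSq c + normSq d : ℂ) = conj c * c + conj d * d := by
    rw [normSq_eq_conj_mul_self, normSq_eq_conj_mul_self]
  rw [sphereRotation]
  generalize hD : c * z + d = D at hz ⊢
  generalize (normSq c + normSq d : ℂ) = N at hN hNdef ⊢
  field_simp
  linear_combination (a * conj c + b * conj d) * hD + (a * z + b) * hNdef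

/-- The pushforward of `γ` under any Möbius transformation equals its pushforward under some
invertible affine map of ℂ. -/
theorem stmt9 (a b c d : ℂ) (h : a * d - b * c ≠ 0) :
    ∃ α β : ℂ, α ≠ 0 ∧
      Measure.map (fun z => (a * z + b) / (c * z + d)) gammaC1 =
        Measure.map (fun z => α * z + β) gammaC1 := by
  have hcd : c ≠ 0 ∨ d ≠ 0 := by
    by_contra! hcd
    simp [hcd] at h
  set α := (a * d - b * c) / (normSq c + normSq d : ℂ)
  set β := (a * conj c + b * conj d) / (normSq c + normSq d : ℂ)
  have hae : (fun z => (a * z + b) / (c * z + d)) =ᵐ[gammaC1]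
      (fun w => α * w + β) ∘ sphereRotation c d := by
    refine measure_mono_null (fun z hz => ?_)
      (withDensity_absolutelyContinuous _ _ (volume_setOf_mul_add_eq_zero hcd))
    by_contra hz'
    exact hz (div_eq_mul_sphereRotation_add hz')
  refine ⟨α, β, div_ne_zero h (normSq_add_normSq_ne_zero hcd), ?_⟩
  rw [Measure.map_congr hae, ← Measure.map_map (by fun_prop) (measurable_sphereRotation c d),
    gammaC1_map_sphereRotation hcd]
end

section
/- Let μ be a probability measure on ℂ^p such that μ(H_g) = 0 for every (p+1)×p complex matrix g of rank < p+1 acting as a projective map, where H_g is the image of ℂ^p under the corresponding map. Then the isotropy subgroup K_μ = {g ∈ GL(p+1,ℂ) : g·μ = μ, |det g| = 1} is a compact subgroup of GL(p+1,ℂ). -/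
open MeasureTheory Real

/-- The generalized Möbius (projective) transformation associated with a `(p+1) × (p+1)`
complex matrix `g`, `M_g(z) = (az+b)/(cz+d)`. -/
noncomputable def mobius {p : ℕ} (g : Matrix (Fin (p+1)) (Fin (p+1)) ℂ) (z : Fin p → ℂ) :
    Fin p → ℂ :=
  fun i => ((∑ j, g i.castSucc j.castSucc * z j) + g i.castSucc (Fin.last p)) /
    ((∑ j, g (Fin.last p) j.castSucc * z j) + g (Fin.last p) (Fin.last p))

/-!
The hypothesis makes every affine hyperplane `μ`-null: the projection onto a hyperplane along a
coordinate axis is a singular projective map with that hyperplane as image. Hence the denominator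
of `mobius g` vanishes only on a null set as soon as the last row of `g` is nonzero, so `g ↦ mobius g`
is `μ`-a.e. continuous there and limits of matrices fixing `μ` still fix `μ`: the stabilizer is
closed. If it were unbounded, normalizing an escaping sequence would give a limit `g ≠ 0` with
`det g = 0`. If the last row of `g` is nonzero, `g` fixes `μ` although `mobius g` maps everything
into the null set `range (mobius g)`; if it vanishes, the maps push almost every point to infinity,
which no sequence of `μ`-preserving maps can do.
-/

open Filter Topology Matrix

theorem Matrix.rank_lt_card_of_det_eq_zero {n K : Type*} [Fintype n] [DecidableEq n] [Field K]
    {A : Matrix n n K} (hA : A.det = 0) : A.rank < Fintype.card n := by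
  obtain ⟨v, hv, hAv⟩ := exists_mulVec_eq_zero_iff.mpr hA
  have hker : 0 < Module.finrank K (LinearMap.ker A.mulVecLin) :=
    Module.finrank_pos_iff_exists_ne_zero.mpr ⟨⟨v, hAv⟩, fun h ↦ hv (congrArg Subtype.val h)⟩
  have := A.mulVecLin.finrank_range_add_finrank_ker
  rw [Module.finrank_fintype_fun_eq_card] at this
  rw [rank]
  omega

namespace MeasureTheory.Measure

variable {Ω E : Type*} [MeasurableSpace Ω] [TopologicalSpace E] [MeasurableSpace E]

theorem map_eq_of_ae_tendsto [BorelSpace E] [HasOuterApproxClosed E] {μ : Measure Ω}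
    [IsProbabilityMeasure μ] {ν : Measure E} {X : ℕ → Ω → E} {Z : Ω → E}
    (hX : ∀ n, AEMeasurable (X n) μ) (hZ : AEMeasurable Z μ)
    (hlim : ∀ᵐ ω ∂μ, Tendsto (fun n ↦ X n ω) atTop (𝓝 (Z ω)))
    (hmap : ∀ n, μ.map (X n) = ν) : μ.map Z = ν := by
  have hν : IsProbabilityMeasure ν := hmap 0 ▸ isProbabilityMeasure_map (hX 0)
  have hident : TendstoInDistribution X atTop id (fun _ ↦ μ) ν :=
    tendstoInDistribution_of_identDistrib 0 (fun n ↦ ⟨hX 0, hX n, by rw [hmap, hmap]⟩)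
      ⟨hX 0, aemeasurable_id, by rw [hmap, map_id]⟩
  simpa using tendstoInDistribution_unique X (tendstoInDistribution_of_ae_tendsto hX hZ hlim) hident

theorem eq_zero_of_ae_tendsto_cocompact [OpensMeasurableSpace E] [T2Space E] [SigmaCompactSpace E]
    {μ : Measure Ω} [IsFiniteMeasure μ] {ν : Measure E} {X : ℕ → Ω → E}
    (hX : ∀ n, Measurable (X n)) (hlim : ∀ᵐ ω ∂μ, Tendsto (fun n ↦ X n ω) atTop (cocompact E))
    (hmap : ∀ n, μ.map (X n) = ν) : ν = 0 := by
  have hcompact : ∀ K, IsCompact K → ν K = 0 := fun K hK ↦ by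
    have hmeas := hK.isClosed.measurableSet
    have htend : Tendsto (fun n ↦ μ (X n ⁻¹' K)) atTop (𝓝 (μ ∅)) :=
      tendsto_measure_of_ae_tendsto_indicator_of_isFiniteMeasure atTop MeasurableSet.empty
        (fun n ↦ hX n hmeas) (hlim.mono fun ω hω ↦
          (hω.eventually_mem hK.compl_mem_cocompact).mono fun n hn ↦ by simpa using hn)
    simp_rw [← map_apply (hX _) hmeas, hmap, measure_empty] at htend
    exact tendsto_nhds_unique tendsto_const_nhds htend
  rw [← measure_univ_eq_zero, ← iUnion_compactCovering]
  exact measure_iUnion_null fun n ↦ hcompact _ (isCompact_compactCovering E n)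

end MeasureTheory.Measure

variable {p : ℕ}

def NullOnDegenerateMobiusImages (μ : Measure (Fin p → ℂ)) : Prop :=
  ∀ g : Matrix (Fin (p+1)) (Fin (p+1)) ℂ, g.rank < p + 1 → μ (Set.range (mobius g)) = 0

def mobiusStabilizer (μ : Measure (Fin p → ℂ)) : Set (Matrix (Fin (p+1)) (Fin (p+1)) ℂ) :=
  {g | Measure.map (mobius g) μ = μ ∧ ‖g.det‖ = 1}

theorem mobius_apply (g : Matrix (Fin (p+1)) (Fin (p+1)) ℂ) (z : Fin p → ℂ) (i : Fin p) :
    mobius g z i = (g *ᵥ Fin.snoc z 1) i.castSucc / (g *ᵥ Fin.snoc z 1) (Fin.last p) := by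
  simp [mobius, mulVec, dotProduct, Fin.sum_univ_castSucc]

theorem mobius_eq_self_of_mulVec_eq {g : Matrix (Fin (p+1)) (Fin (p+1)) ℂ} {z : Fin p → ℂ}
    (h : g *ᵥ Fin.snoc z 1 = Fin.snoc z 1) : mobius g z = z := by
  ext i
  simp [mobius_apply, h]

theorem mobius_smul {c : ℂ} (hc : c ≠ 0) (g : Matrix (Fin (p+1)) (Fin (p+1)) ℂ) :
    mobius (c • g) = mobius g := by
  ext z i
  simp only [mobius_apply, smul_mulVec, Pi.smul_apply, smul_eq_mul, mul_div_mul_left _ _ hc]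

theorem measurable_mobius (g : Matrix (Fin (p+1)) (Fin (p+1)) ℂ) : Measurable (mobius g) := by
  unfold mobius
  fun_prop

theorem continuousAt_mobius {g : Matrix (Fin (p+1)) (Fin (p+1)) ℂ} {z : Fin p → ℂ}
    (hz : (g *ᵥ Fin.snoc z 1) (Fin.last p) ≠ 0) :
    ContinuousAt (fun h : Matrix (Fin (p+1)) (Fin (p+1)) ℂ ↦ mobius h z) g := by
  simp_rw [funext (mobius_apply _ z)]
  have hcont : Continuous fun h : Matrix (Fin (p+1)) (Fin (p+1)) ℂ ↦ h *ᵥ Fin.snoc z 1 :=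
    continuous_id.matrix_mulVec continuous_const
  exact continuousAt_pi.mpr fun i ↦ ((continuous_apply _).comp hcont).continuousAt.div
    ((continuous_apply _).comp hcont).continuousAt hz

theorem tendsto_mobius_cocompact {y : ℕ → Matrix (Fin (p+1)) (Fin (p+1)) ℂ}
    {g : Matrix (Fin (p+1)) (Fin (p+1)) ℂ} {z : Fin p → ℂ} {i : Fin p}
    (hlim : Tendsto y atTop (𝓝 g)) (hlast : g (Fin.last p) = 0)
    (hnum : (g *ᵥ Fin.snoc z 1) i.castSucc ≠ 0)
    (hden : ∀ n, (y n *ᵥ Fin.snoc z 1) (Fin.last p) ≠ 0) :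
    Tendsto (fun n ↦ mobius (y n) z) atTop (cocompact _) := by
  have hv : Tendsto (fun n ↦ y n *ᵥ Fin.snoc z 1) atTop (𝓝 (g *ᵥ Fin.snoc z 1)) :=
    ((continuous_id.matrix_mulVec continuous_const).tendsto g).comp hlim
  have hden' : Tendsto (fun n ↦ (y n *ᵥ Fin.snoc z 1) (Fin.last p)) atTop (𝓝[≠] 0) := by
    refine tendsto_nhdsWithin_iff.mpr ⟨?_, Eventually.of_forall hden⟩
    have := ((continuous_apply (Fin.last p)).tendsto _).comp hv
    simpa [Function.comp_def, mulVec, hlast] using this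
  have hcoord : Tendsto (fun n ↦ ‖mobius (y n) z i‖) atTop atTop := by
    simp_rw [mobius_apply, norm_div, div_eq_mul_inv, ← norm_inv]
    exact (((continuous_apply _).tendsto _).comp hv).norm.pos_mul_atTop (norm_pos_iff.mpr hnum)
      (tendsto_norm_inv_nhdsNE_zero_atTop.comp hden')
  rw [← Metric.cobounded_eq_cocompact, ← tendsto_norm_atTop_iff_cobounded]
  exact tendsto_atTop_mono (fun n ↦ norm_le_pi_norm _ i) hcoord

section Measure

variable {μ : Measure (Fin p → ℂ)}

theorem measure_setOf_dotProduct_snoc_eq_zero (hμ : NullOnDegenerateMobiusImages μ)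
    {a : Fin (p+1) → ℂ} (ha : a ≠ 0) : μ {z | a ⬝ᵥ Fin.snoc z 1 = 0} = 0 := by
  by_cases hlin : ∃ i : Fin p, a i.castSucc ≠ 0
  · obtain ⟨i, hi⟩ := hlin
    set e : Fin (p+1) → ℂ := Pi.single i.castSucc 1
    -- the projection onto the hyperplane `a ⬝ᵥ w = 0` along `e`; it kills `e`
    set G : Matrix (Fin (p+1)) (Fin (p+1)) ℂ := 1 - vecMulVec e ((a i.castSucc)⁻¹ • a)
    have hG : ∀ w, G *ᵥ w = w - ((a i.castSucc)⁻¹ * (a ⬝ᵥ w)) • e := fun w ↦ by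
      ext j
      simp [G, sub_mulVec, smul_mulVec, vecMulVec_mulVec]
      ring
    have hdet : G.det = 0 := by
      refine exists_mulVec_eq_zero_iff.mp ⟨e, by simp [e], ?_⟩
      simp [hG, e, dotProduct_single, inv_mul_cancel₀ hi]
    refine measure_mono_null (fun z (hz : a ⬝ᵥ Fin.snoc z 1 = 0) ↦ ?_)
      (hμ G (by simpa using rank_lt_card_of_det_eq_zero hdet))
    exact ⟨z, mobius_eq_self_of_mulVec_eq (by simp [hG, hz])⟩
  · push Not at hlin
    have hlast : a (Fin.last p) ≠ 0 := fun h ↦ ha (funext fun j ↦ Fin.lastCases h hlin j)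
    convert measure_empty (μ := μ)
    ext z
    simp [dotProduct, Fin.sum_univ_castSucc, hlin, hlast]

theorem map_mobius_ne_self_of_det_eq_zero [NeZero μ] (hμ : NullOnDegenerateMobiusImages μ)
    {g : Matrix (Fin (p+1)) (Fin (p+1)) ℂ} (hg : g.det = 0) : μ.map (mobius g) ≠ μ := by
  intro hmap
  have h := Measure.le_map_apply (μ := μ) (measurable_mobius g).aemeasurable (Set.range (mobius g))
  rw [Set.preimage_range, hmap, hμ g (by simpa using rank_lt_card_of_det_eq_zero hg),
    nonpos_iff_eq_zero, Measure.measure_univ_eq_zero] at h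
  exact NeZero.ne μ h

theorem map_mobius_eq_of_tendsto [IsProbabilityMeasure μ] (hμ : NullOnDegenerateMobiusImages μ)
    {x : ℕ → Matrix (Fin (p+1)) (Fin (p+1)) ℂ} {g : Matrix (Fin (p+1)) (Fin (p+1)) ℂ}
    (hx : ∀ n, μ.map (mobius (x n)) = μ) (hlim : Tendsto x atTop (𝓝 g))
    (hg : g (Fin.last p) ≠ 0) : μ.map (mobius g) = μ := by
  refine Measure.map_eq_of_ae_tendsto (fun n ↦ (measurable_mobius _).aemeasurable)
    (measurable_mobius g).aemeasurable ?_ hx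
  filter_upwards [measure_eq_zero_iff_ae_notMem.mp (measure_setOf_dotProduct_snoc_eq_zero hμ hg)]
    with z hz
  exact (continuousAt_mobius hz).tendsto.comp hlim

theorem ae_tendsto_mobius_cocompact (hμ : NullOnDegenerateMobiusImages μ)
    {y : ℕ → Matrix (Fin (p+1)) (Fin (p+1)) ℂ} {g : Matrix (Fin (p+1)) (Fin (p+1)) ℂ} {i : Fin p}
    (hdet : ∀ n, (y n).det ≠ 0) (hlim : Tendsto y atTop (𝓝 g)) (hlast : g (Fin.last p) = 0)
    (hi : g i.castSucc ≠ 0) :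
    ∀ᵐ z ∂μ, Tendsto (fun n ↦ mobius (y n) z) atTop (cocompact _) := by
  have hden : ∀ n, ∀ᵐ z ∂μ, (y n *ᵥ Fin.snoc z 1) (Fin.last p) ≠ 0 := fun n ↦
    measure_eq_zero_iff_ae_notMem.mp <| measure_setOf_dotProduct_snoc_eq_zero hμ
      fun h ↦ hdet n (det_eq_zero_of_row_eq_zero _ fun j ↦ congrFun h j)
  filter_upwards [ae_all_iff.mpr hden,
    measure_eq_zero_iff_ae_notMem.mp (measure_setOf_dotProduct_snoc_eq_zero hμ hi)]
    with z hzden hznum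
  exact tendsto_mobius_cocompact hlim hlast hznum hzden

theorem det_ne_zero_of_tendsto_of_map_mobius_eq [IsProbabilityMeasure μ]
    (hμ : NullOnDegenerateMobiusImages μ)
    {y : ℕ → Matrix (Fin (p+1)) (Fin (p+1)) ℂ} {g : Matrix (Fin (p+1)) (Fin (p+1)) ℂ}
    (hy : ∀ n, μ.map (mobius (y n)) = μ) (hdet : ∀ n, (y n).det ≠ 0)
    (hlim : Tendsto y atTop (𝓝 g)) (hg : g ≠ 0) : g.det ≠ 0 := by
  intro hg0
  by_cases hlast : g (Fin.last p) = 0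
  · obtain ⟨i, hi⟩ : ∃ i : Fin p, g i.castSucc ≠ 0 := by
      by_contra! h
      exact hg (funext fun k ↦ Fin.lastCases hlast h k)
    exact IsProbabilityMeasure.ne_zero μ <| Measure.eq_zero_of_ae_tendsto_cocompact
      (fun n ↦ measurable_mobius _) (ae_tendsto_mobius_cocompact hμ hdet hlim hlast hi) hy
  · exact map_mobius_ne_self_of_det_eq_zero hμ hg0 (map_mobius_eq_of_tendsto hμ hy hlim hlast)

theorem isClosed_mobiusStabilizer [IsProbabilityMeasure μ] (hμ : NullOnDegenerateMobiusImages μ) :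
    IsClosed (mobiusStabilizer μ) := by
  -- `Matrix` carries the product topology, but the instance is only found on the function type
  have : SequentialSpace (Matrix (Fin (p+1)) (Fin (p+1)) ℂ) :=
    inferInstanceAs (SequentialSpace (Fin (p+1) → Fin (p+1) → ℂ))
  refine IsSeqClosed.isClosed fun x g hx hlim ↦ ?_
  have hdet : ‖g.det‖ = 1 :=
    (isClosed_eq continuous_id.matrix_det.norm continuous_const).mem_of_tendsto
      hlim (Eventually.of_forall fun n ↦ (hx n).2)
  have hlast : g (Fin.last p) ≠ 0 := fun h ↦ by
    simp [det_eq_zero_of_row_eq_zero (Fin.last p) (congrFun h)] at hdet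
  exact ⟨map_mobius_eq_of_tendsto hμ (fun n ↦ (hx n).1) hlim hlast, hdet⟩

open scoped Matrix.Norms.Elementwise in
theorem isBounded_mobiusStabilizer [IsProbabilityMeasure μ]
    (hμ : NullOnDegenerateMobiusImages μ) : Bornology.IsBounded (mobiusStabilizer μ) := by
  by_contra hunb
  have hlarge : ∀ n : ℕ, ∃ x ∈ mobiusStabilizer μ, (n : ℝ) + 1 ≤ ‖x‖ := fun n ↦ by
    by_contra! h
    exact hunb (isBounded_iff_forall_norm_le.mpr ⟨n + 1, fun x hx ↦ (h x hx).le⟩)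
  choose x hxK hxn using hlarge
  have hxpos : ∀ n, 0 < ‖x n‖ := fun n ↦ (by positivity : (0 : ℝ) < n + 1).trans_le (hxn n)
  set y := fun n ↦ (‖x n‖ : ℂ)⁻¹ • x n
  have hy : ∀ n, y n ∈ Metric.sphere 0 1 := fun n ↦ by simp [y, norm_smul, (hxpos n).ne']
  have hdety : ∀ n, ‖(y n).det‖ = ‖x n‖⁻¹ ^ (p + 1) := fun n ↦ by simp [y, (hxK n).2]
  obtain ⟨g, hg, φ, hφ, hlim⟩ := (isCompact_sphere 0 1).tendsto_subseq hy
  have hxφ : Tendsto (fun n ↦ ‖x (φ n)‖) atTop atTop :=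
    tendsto_atTop_mono (fun n ↦ (le_add_of_nonneg_right zero_le_one).trans (hxn (φ n)))
      (tendsto_natCast_atTop_atTop.comp hφ.tendsto_atTop)
  have hdet : g.det = 0 := by
    have h := (continuous_id.matrix_det.norm.tendsto g).comp hlim
    simp only [Function.comp_def, id, hdety] at h
    have h0 : Tendsto (fun n ↦ ‖x (φ n)‖⁻¹ ^ (p + 1)) atTop (𝓝 0) := by
      simpa using (tendsto_inv_atTop_zero.comp hxφ).pow (p + 1)
    exact norm_eq_zero.mp (tendsto_nhds_unique h h0)
  refine det_ne_zero_of_tendsto_of_map_mobius_eq hμ (y := y ∘ φ) (fun n ↦ ?_)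
    (fun n ↦ norm_ne_zero_iff.mp ?_) hlim (ne_zero_of_mem_sphere one_ne_zero ⟨g, hg⟩) hdet
  · simpa [y, mobius_smul (inv_ne_zero (Complex.ofReal_ne_zero.mpr (hxpos _).ne'))] using (hxK _).1
  · exact (hdety (φ n)).trans_ne (pow_ne_zero _ (inv_ne_zero (hxpos _).ne'))

end Measure

/-- If `μ` gives no mass to the image `H_g` of ℂ^p under any degenerate projective map
(`rank g < p+1`), then the isotropy subgroup
`K_μ = {g ∈ GL(p+1,ℂ) : g·μ = μ, |det g| = 1}` is compact. -/
theorem stmt10 (p : ℕ) (μ : Measure (Fin p → ℂ)) [IsProbabilityMeasure μ]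
    (hμ : ∀ g : Matrix (Fin (p+1)) (Fin (p+1)) ℂ, g.rank < p + 1 →
      μ (Set.range (mobius g)) = 0) :
    IsCompact {g : Matrix (Fin (p+1)) (Fin (p+1)) ℂ |
      Measure.map (mobius g) μ = μ ∧ ‖g.det‖ = 1} := by
  open scoped Matrix.Norms.Elementwise in
  exact Metric.isCompact_of_isClosed_isBounded (isClosed_mobiusStabilizer hμ)
    (isBounded_mobiusStabilizer hμ)
end
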